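/- arXiv:2304.06922 — 3 statements merged into one kernel-verified Lean document; each statement's English description precedes it below -/
import Mathlib

section
/- Let f be a discrete Morse function on a finite simplicial complex K, and let K(c) denote the sub-level complex consisting of all simplices σ with f(σ) ≤ c together with all their faces. If a simplex σ ∈ K(c) is critical for the restriction of f to K(c), then for every c' ≥ c, σ is critical for the restriction of f to K(c'). -/
open Finset

open scoped Classical

variable {V : Type*}

/-- An abstract simplicial complex on vertex type `V`: a finite set of nonempty
finite sets, closed under taking nonempty subsets (faces). -/
def IsComplex [DecidableEq V] (K : Finset (Finset V)) : Prop :=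
  (∀ σ ∈ K, σ.Nonempty) ∧ ∀ σ ∈ K, ∀ τ : Finset V, τ ⊆ σ → τ.Nonempty → τ ∈ K

/-- `f` is a discrete Morse function on the complex `L`: every simplex has at most one
cofacet with smaller-or-equal value, and at most one facet with larger-or-equal value. -/
def IsDMF [DecidableEq V] (L : Finset (Finset V)) (f : Finset V → ℝ) : Prop :=
  ∀ σ ∈ L,
    (L.filter fun τ => σ ⊆ τ ∧ τ.card = σ.card + 1 ∧ f τ ≤ f σ).card ≤ 1 ∧
    (L.filter fun ν => ν ⊆ σ ∧ σ.card = ν.card + 1 ∧ f σ ≤ f ν).card ≤ 1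

/-- A simplex `σ` is critical for `f` in the complex `L`. -/
def IsCritical [DecidableEq V] (L : Finset (Finset V)) (f : Finset V → ℝ) (σ : Finset V) :
    Prop :=
  σ ∈ L ∧
  (∀ τ ∈ L, σ ⊆ τ → τ.card = σ.card + 1 → f σ < f τ) ∧
  (∀ ν ∈ L, ν ⊆ σ → σ.card = ν.card + 1 → f ν < f σ)

/-- The sub-level complex `K(c)`: all simplices with `f`-value at most `c`,
together with all their faces. -/
noncomputable def sublevel [DecidableEq V] (K : Finset (Finset V)) (f : Finset V → ℝ)
    (c : ℝ) : Finset (Finset V) :=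
  K.filter fun τ => ∃ σ ∈ K, f σ ≤ c ∧ τ ⊆ σ

/-- If `σ` is critical for the restriction of `f` to the sub-level complex `K(c)`,
then it stays critical in every later sub-level complex `K(c')`, `c' ≥ c`. -/
theorem critical_persists [DecidableEq V] (K : Finset (Finset V)) (f : Finset V → ℝ)
    (hK : IsComplex K) (hf : IsDMF K f) (c c' : ℝ) (hcc : c ≤ c') (σ : Finset V)
    (hcrit : IsCritical (sublevel K f c) f σ) :
    IsCritical (sublevel K f c') f σ := by
  obtain ⟨hσmem, hcof, hfac⟩ := hcrit
  have hσK : σ ∈ K := (mem_filter.mp hσmem).1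
  obtain ⟨ρ, hρK, hρc, hσρ⟩ := (mem_filter.mp hσmem).2
  have hσne : σ.Nonempty := hK.1 σ hσK
  -- Key: every simplex strictly between σ and ρ has f-value > f σ.
  have key : ∀ n (α : Finset V), α.card = n → σ ⊆ α → α ⊆ ρ → σ ≠ α → f σ < f α := by
    intro n
    induction n using Nat.strong_induction_on with
    | _ n ih =>
      intro α hcard hσα hαρ hne
      have hαne : α.Nonempty := hσne.mono hσα
      have hαK : α ∈ K := hK.2 ρ hρK α hαρ hαne
      have hαsub : α ∈ sublevel K f c :=
        mem_filter.mpr ⟨hαK, ρ, hρK, hρc, hαρ⟩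
      have hss : σ ⊂ α := ssubset_of_subset_of_ne hσα hne
      have hclt : σ.card < α.card := card_lt_card hss
      rcases eq_or_lt_of_le (Nat.succ_le_of_lt hclt) with heq | hlt
      · exact hcof α hαsub hσα heq.symm
      · -- codimension ≥ 2: pick two distinct vertices of α \ σ
        have hsd : 1 < (α \ σ).card := by
          have := card_sdiff_of_subset hσα
          omega
        obtain ⟨x, hx, y, hy, hxy⟩ := one_lt_card.mp hsd
        have hxα : x ∈ α := (mem_sdiff.mp hx).1
        have hxσ : x ∉ σ := (mem_sdiff.mp hx).2
        have hyα : y ∈ α := (mem_sdiff.mp hy).1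
        have hyσ : y ∉ σ := (mem_sdiff.mp hy).2
        by_contra hle
        push_neg at hle
        have fact : ∀ z ∈ α \ σ, α.erase z ∈
            K.filter fun ν => ν ⊆ α ∧ α.card = ν.card + 1 ∧ f α ≤ f ν := by
          intro z hz
          have hzα : z ∈ α := (mem_sdiff.mp hz).1
          have hzσ : z ∉ σ := (mem_sdiff.mp hz).2
          have hσe : σ ⊆ α.erase z := subset_erase.mpr ⟨hσα, hzσ⟩
          have heα : α.erase z ⊆ α := erase_subset _ _
          have heρ : α.erase z ⊆ ρ := heα.trans hαρ
          have hene : (α.erase z).Nonempty := hσne.mono hσe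
          have heK : α.erase z ∈ K := hK.2 ρ hρK _ heρ hene
          have hecard : (α.erase z).card = α.card - 1 := card_erase_of_mem hzα
          have hene2 : σ ≠ α.erase z := by
            intro h
            have : (α.erase z).card = σ.card := by rw [← h]
            omega
          have hflt : f σ < f (α.erase z) := by
            refine ih (α.card - 1) (by omega) _ hecard hσe heρ hene2
          exact mem_filter.mpr ⟨heK, heα, by omega, le_trans hle hflt.le⟩
        have h2 : ({α.erase x, α.erase y} : Finset (Finset V)) ⊆
            K.filter fun ν => ν ⊆ α ∧ α.card = ν.card + 1 ∧ f α ≤ f ν := by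
          intro t ht
          rcases mem_insert.mp ht with h | h
          · exact h ▸ fact x hx
          · exact (mem_singleton.mp h) ▸ fact y hy
        have hne2 : α.erase x ≠ α.erase y := by
          intro h
          have hx' : x ∈ α.erase y := mem_erase.mpr ⟨hxy, hxα⟩
          rw [← h] at hx'
          exact (mem_erase.mp hx').1 rfl
        have := (hf α hαK).2
        have hcard2 : ({α.erase x, α.erase y} : Finset (Finset V)).card = 2 :=
          card_pair hne2
        have := card_le_card h2
        omega
  -- Consequently f σ ≤ c
  have hfσc : f σ ≤ c := by
    by_cases h : σ = ρ
    · exact h ▸ hρc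
    · exact le_trans (key ρ.card ρ rfl hσρ Subset.rfl h).le hρc
  refine ⟨mem_filter.mpr ⟨hσK, σ, hσK, hfσc.trans hcc, Subset.rfl⟩, ?_, ?_⟩
  · intro τ hτ hστ hcard
    have hτK : τ ∈ K := (mem_filter.mp hτ).1
    by_contra hle
    push_neg at hle
    have : τ ∈ sublevel K f c :=
      mem_filter.mpr ⟨hτK, τ, hτK, le_trans hle hfσc, Subset.rfl⟩
    exact absurd (hcof τ this hστ hcard) (not_lt.mpr hle)
  · intro ν hν hνσ hcard
    have hνK : ν ∈ K := (mem_filter.mp hν).1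
    have : ν ∈ sublevel K f c :=
      mem_filter.mpr ⟨hνK, σ, hσK, hfσc, hνσ⟩
    exact hfac ν this hνσ hcard
end

section
/- Let G be a finite simple graph viewed as a 1-dimensional simplicial complex, and let f₁, f₂ be discrete Morse functions on G with gradient vector fields V₁, V₂. Let ṽ₁ be a critical vertex of f₁ and ṽ₂ a critical vertex of f₂. If ṽ₁ is strongly connected to ṽ₂, then ṽ₁ is not strongly connected to any other critical vertex of f₂, and ṽ₂ is not strongly connected to any other critical vertex of f₁. Moreover, the gradient path connecting ṽ₁ to ṽ₂ and the gradient path connecting ṽ₂ to ṽ₁ are each unique. -/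
open Finset

open scoped Classical

variable {V : Type*}

/-- `K` is a (simple) graph: a simplicial complex of dimension at most 1. -/
def IsGraph [DecidableEq V] (K : Finset (Finset V)) : Prop :=
  IsComplex K ∧ ∀ σ ∈ K, σ.card ≤ 2

/-- One step of a gradient `V`-path of dimension `(0,1)`: move from vertex `a`
across the edge `{a, b}` (which forms a gradient pair with `a`) to the vertex `b`. -/
def VStep [DecidableEq V] (K : Finset (Finset V)) (f : Finset V → ℝ) (a b : V) : Prop :=
  a ≠ b ∧ ({a, b} : Finset V) ∈ K ∧ f {a, b} ≤ f ({a} : Finset V)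

/-- `l` is a gradient path (in the gradient vector field of `f`) of vertices
from `a` to `b`. -/
def IsVPath [DecidableEq V] (K : Finset (Finset V)) (f : Finset V → ℝ) (l : List V)
    (a b : V) : Prop :=
  l.Chain' (VStep K f) ∧ l.head? = some a ∧ l.getLast? = some b

/-- The vertex `a` is connected to the vertex `b` through a gradient path
in the gradient vector field of `f`. -/
def Conn0 [DecidableEq V] (K : Finset (Finset V)) (f : Finset V → ℝ) (a b : V) : Prop :=
  ∃ l : List V, IsVPath K f l a b

/-- One step of a gradient path of edges: pass from the edge `e` to the edge `e'`
through a common vertex `v` forming a gradient pair with `e'`. -/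
def EStep [DecidableEq V] (K : Finset (Finset V)) (f : Finset V → ℝ)
    (e e' : Finset V) : Prop :=
  e ∈ K ∧ e' ∈ K ∧ e.card = 2 ∧ e'.card = 2 ∧ e ≠ e' ∧
    ∃ v, v ∈ e ∧ v ∈ e' ∧ f e' ≤ f ({v} : Finset V)

/-- `l` is a gradient path of edges from `e` to `e'` in the gradient vector field of `f`. -/
def IsEPath [DecidableEq V] (K : Finset (Finset V)) (f : Finset V → ℝ)
    (l : List (Finset V)) (e e' : Finset V) : Prop :=
  l.Chain' (EStep K f) ∧ l.head? = some e ∧ l.getLast? = some e'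

/-- The edge `e` is connected to the edge `e'` through a gradient path
in the gradient vector field of `f`. -/
def Conn1 [DecidableEq V] (K : Finset (Finset V)) (f : Finset V → ℝ)
    (e e' : Finset V) : Prop :=
  ∃ l : List (Finset V), IsEPath K f l e e'

/-- The `f₁`-critical vertex `a` and the `f₂`-critical vertex `b` are strongly
connected: `a` is connected to `b` via a gradient path in the field of `f₂`, and
`b` is connected to `a` via a gradient path in the field of `f₁`. -/
def Strong0 [DecidableEq V] (K : Finset (Finset V)) (f₁ f₂ : Finset V → ℝ)
    (a b : V) : Prop :=
  Conn0 K f₂ a b ∧ Conn0 K f₁ b a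

/-- The `f₁`-critical edge `e` and the `f₂`-critical edge `e'` are strongly
connected: `e` is connected to `e'` via a gradient path in the field of `f₁`, and
`e'` is connected to `e` via a gradient path in the field of `f₂`. -/
def Strong1 [DecidableEq V] (K : Finset (Finset V)) (f₁ f₂ : Finset V → ℝ)
    (e e' : Finset V) : Prop :=
  Conn1 K f₁ e e' ∧ Conn1 K f₂ e' e

section Aux

variable [DecidableEq V] {K : Finset (Finset V)} {f : Finset V → ℝ}

lemma aux_singleton_mem (hG : IsGraph K) {a b : V} (h : ({a, b} : Finset V) ∈ K) :
    ({a} : Finset V) ∈ K :=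
  hG.1.2 _ h {a} (by simp) (by simp)

lemma aux_vstep_unique (hG : IsGraph K) (hf : IsDMF K f) {a b b' : V}
    (h1 : VStep K f a b) (h2 : VStep K f a b') : b = b' := by
  obtain ⟨hab, he1, hfe1⟩ := h1
  obtain ⟨hab', he2, hfe2⟩ := h2
  have ha : ({a} : Finset V) ∈ K := aux_singleton_mem hG he1
  have hcard := (hf _ ha).1
  have hc1 : ({a, b} : Finset V).card = 2 := by
    rw [Finset.card_insert_of_notMem (by simpa using hab)]; simp
  have hc2 : ({a, b'} : Finset V).card = 2 := by
    rw [Finset.card_insert_of_notMem (by simpa using hab')]; simp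
  have hm1 : ({a, b} : Finset V) ∈
      K.filter fun τ => ({a} : Finset V) ⊆ τ ∧ τ.card = ({a} : Finset V).card + 1 ∧
        f τ ≤ f {a} := by
    simp only [Finset.mem_filter]
    exact ⟨he1, by simp, by simp [hc1], hfe1⟩
  have hm2 : ({a, b'} : Finset V) ∈
      K.filter fun τ => ({a} : Finset V) ⊆ τ ∧ τ.card = ({a} : Finset V).card + 1 ∧
        f τ ≤ f {a} := by
    simp only [Finset.mem_filter]
    exact ⟨he2, by simp, by simp [hc2], hfe2⟩
  have heq : ({a, b} : Finset V) = {a, b'} := Finset.card_le_one.mp hcard _ hm1 _ hm2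
  have hb : b ∈ ({a, b'} : Finset V) := heq ▸ (by simp : b ∈ ({a, b} : Finset V))
  simp only [Finset.mem_insert, Finset.mem_singleton] at hb
  exact hb.resolve_left hab.symm

lemma aux_crit_no_step {v : V} (hc : IsCritical K f {v}) {y : V}
    (h : VStep K f v y) : False := by
  obtain ⟨hvK, hup, _⟩ := hc
  obtain ⟨hne, heK, hfe⟩ := h
  have hcard : ({v, y} : Finset V).card = 2 := by
    rw [Finset.card_insert_of_notMem (by simpa using hne)]; simp
  have := hup _ heK (by simp) (by simp [hcard])
  linarith

lemma aux_path_unique (hG : IsGraph K) (hf : IsDMF K f) :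
    ∀ (l l' : List V) (a b b' : V), l.Chain' (VStep K f) → l'.Chain' (VStep K f) →
    l.head? = some a → l'.head? = some a → l.getLast? = some b → l'.getLast? = some b' →
    (∀ y, ¬ VStep K f b y) → (∀ y, ¬ VStep K f b' y) → l = l' := by
  intro l
  induction l with
  | nil => intro l' a b b' _ _ h; simp at h
  | cons x rest ih =>
    intro l' a b b' hc hc' hh hh' hl hl' hb hb'
    cases l' with
    | nil => simp at hh'
    | cons x' rest' =>
      have hx : x = a := by simpa using hh
      have hx' : x' = a := by simpa using hh'
      have hxx : x = x' := hx.trans hx'.symm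
      cases rest with
      | nil =>
        cases rest' with
        | nil => rw [hxx]
        | cons y' t' =>
          have hba : x = b := by simpa using hl
          exact absurd ((List.isChain_cons_cons.mp hc').1) (hxx ▸ hba ▸ hb y')
      | cons y t =>
        have hstep := (List.isChain_cons_cons.mp hc).1
        cases rest' with
        | nil =>
          have hb'a : x' = b' := by simpa using hl'
          exact absurd hstep (hxx ▸ hb'a ▸ hb' y)
        | cons y' t' =>
          have hstep' := (List.isChain_cons_cons.mp hc').1
          have hyy : y = y' := aux_vstep_unique hG hf hstep (hxx ▸ hstep')
          have htail : (y :: t) = (y' :: t') :=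
            ih (y' :: t') y b b' (List.isChain_cons_cons.mp hc).2 (List.isChain_cons_cons.mp hc').2
              rfl (by rw [hyy]; rfl) (by rw [List.getLast?_cons_cons] at hl; exact hl)
              (by rw [List.getLast?_cons_cons] at hl'; exact hl') hb hb'
          rw [hxx, htail]

end Aux

/-- On a graph, if an `f₁`-critical vertex `v₁` is strongly connected to an
`f₂`-critical vertex `v₂`, then neither is strongly connected to any other
critical vertex of the other function, and the connecting gradient paths in
both directions are unique. -/
theorem vertex_strong_unique [DecidableEq V] (K : Finset (Finset V))
    (f₁ f₂ : Finset V → ℝ) (hG : IsGraph K) (hf₁ : IsDMF K f₁) (hf₂ : IsDMF K f₂)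
    (v₁ v₂ : V) (hc₁ : IsCritical K f₁ {v₁}) (hc₂ : IsCritical K f₂ {v₂})
    (hstrong : Strong0 K f₁ f₂ v₁ v₂) :
    (∀ w : V, IsCritical K f₂ {w} → Strong0 K f₁ f₂ v₁ w → w = v₂) ∧
    (∀ w : V, IsCritical K f₁ {w} → Strong0 K f₁ f₂ w v₂ → w = v₁) ∧
    (∀ l l' : List V, IsVPath K f₂ l v₁ v₂ → IsVPath K f₂ l' v₁ v₂ → l = l') ∧
    (∀ l l' : List V, IsVPath K f₁ l v₂ v₁ → IsVPath K f₁ l' v₂ v₁ → l = l') := by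
  obtain ⟨⟨l₂, hl₂c, hl₂h, hl₂l⟩, ⟨l₁, hl₁c, hl₁h, hl₁l⟩⟩ := hstrong
  have hns₁ : ∀ y, ¬ VStep K f₁ v₁ y := fun y h => aux_crit_no_step hc₁ h
  have hns₂ : ∀ y, ¬ VStep K f₂ v₂ y := fun y h => aux_crit_no_step hc₂ h
  refine ⟨?_, ?_, ?_, ?_⟩
  · intro w hcw ⟨⟨m, hmc, hmh, hml⟩, _⟩
    have hnsw : ∀ y, ¬ VStep K f₂ w y := fun y h => aux_crit_no_step hcw h
    have := aux_path_unique hG hf₂ m l₂ v₁ w v₂ hmc hl₂c hmh hl₂h hml hl₂l hnsw hns₂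
    rw [this, hl₂l] at hml
    exact (Option.some.inj hml).symm
  · intro w hcw ⟨_, ⟨m, hmc, hmh, hml⟩⟩
    have hnsw : ∀ y, ¬ VStep K f₁ w y := fun y h => aux_crit_no_step hcw h
    have := aux_path_unique hG hf₁ m l₁ v₂ w v₁ hmc hl₁c hmh hl₁h hml hl₁l hnsw hns₁
    rw [this, hl₁l] at hml
    exact (Option.some.inj hml).symm
  · intro l l' ⟨hc, hh, hl⟩ ⟨hc', hh', hl'⟩
    exact aux_path_unique hG hf₂ l l' v₁ v₂ v₂ hc hc' hh hh' hl hl' hns₂ hns₂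
  · intro l l' ⟨hc, hh, hl⟩ ⟨hc', hh', hl'⟩
    exact aux_path_unique hG hf₁ l l' v₂ v₁ v₁ hc hc' hh hh' hl hl' hns₁ hns₁
end

section
/- Let G be a finite forest (acyclic simple graph) and f₁, f₂ discrete Morse functions on G. For q ∈ {0,1}, if a q-dimensional f₁-critical simplex σ̃₁ is strongly connected to a q-dimensional f₂-critical simplex σ̃₂, then σ̃₁ is not strongly connected to any other f₂-critical q-simplex, σ̃₂ is not strongly connected to any other f₁-critical q-simplex, and the gradient paths realizing the connections in each direction are unique. -/
open Finset

open scoped Classical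

variable {V : Type*}

/-- The simple graph underlying the 1-dimensional complex `K`. -/
def toSG [DecidableEq V] (K : Finset (Finset V)) : SimpleGraph V where
  Adj a b := a ≠ b ∧ ({a, b} : Finset V) ∈ K
  symm := ⟨by intro a b h; exact ⟨h.1.symm, by rw [Finset.pair_comm]; exact h.2⟩⟩
  loopless := ⟨by intro a h; exact h.1 rfl⟩

section Aux

variable [DecidableEq V] {K : Finset (Finset V)} {f g : Finset V → ℝ}

lemma singleton_mem_aux (hG : IsGraph K) {σ : Finset V} (hσ : σ ∈ K) {v : V} (hv : v ∈ σ) :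
    ({v} : Finset V) ∈ K :=
  hG.1.2 σ hσ {v} (Finset.singleton_subset_iff.2 hv) ⟨v, Finset.mem_singleton_self v⟩

/-- A vertex has at most one "cheap" cofacet. -/
lemma cofacet_unique_aux (hG : IsGraph K) (hf : IsDMF K f) {v : V} {e e' : Finset V}
    (he : e ∈ K) (he' : e' ∈ K) (hce : e.card = 2) (hce' : e'.card = 2)
    (hve : v ∈ e) (hve' : v ∈ e') (hfe : f e ≤ f ({v} : Finset V))
    (hfe' : f e' ≤ f ({v} : Finset V)) : e = e' := by
  have hvK : ({v} : Finset V) ∈ K := singleton_mem_aux hG he hve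
  have h1 := (hf _ hvK).1
  have hmem : ∀ d ∈ K, d.card = 2 → v ∈ d → f d ≤ f ({v} : Finset V) →
      d ∈ K.filter fun τ => ({v} : Finset V) ⊆ τ ∧ τ.card = ({v} : Finset V).card + 1 ∧
        f τ ≤ f {v} := by
    intro d hd hcd hvd hfd
    refine Finset.mem_filter.2 ⟨hd, Finset.singleton_subset_iff.2 hvd, ?_, hfd⟩
    simp [hcd]
  exact Finset.card_le_one.1 h1 _ (hmem e he hce hve hfe) _ (hmem e' he' hce' hve' hfe')

/-- An edge has at most one "cheap" facet. -/
lemma facet_unique_aux (hG : IsGraph K) (hf : IsDMF K f) {e : Finset V} {v w : V}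
    (he : e ∈ K) (hce : e.card = 2) (hv : v ∈ e) (hw : w ∈ e)
    (hfv : f e ≤ f ({v} : Finset V)) (hfw : f e ≤ f ({w} : Finset V)) : v = w := by
  have h2 := (hf _ he).2
  have hmem : ∀ u : V, u ∈ e → f e ≤ f ({u} : Finset V) →
      ({u} : Finset V) ∈ K.filter fun ν => ν ⊆ e ∧ e.card = ν.card + 1 ∧ f e ≤ f ν := by
    intro u hu hfu
    exact Finset.mem_filter.2 ⟨singleton_mem_aux hG he hu,
      Finset.singleton_subset_iff.2 hu, by simp [hce], hfu⟩
  have h3 := Finset.card_le_one.1 h2 _ (hmem v hv hfv) _ (hmem w hw hfw)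
  exact Finset.singleton_injective h3

lemma vstep_unique_aux (hG : IsGraph K) (hf : IsDMF K f) {a b b' : V}
    (h : VStep K f a b) (h' : VStep K f a b') : b = b' := by
  obtain ⟨hab, hK, hle⟩ := h
  obtain ⟨hab', hK', hle'⟩ := h'
  have hpair : ({a, b} : Finset V) = {a, b'} :=
    cofacet_unique_aux hG hf hK hK' (Finset.card_pair hab) (Finset.card_pair hab')
      (by simp) (by simp) hle hle'
  have hb : b ∈ ({a, b'} : Finset V) := hpair ▸ (by simp : b ∈ ({a, b} : Finset V))
  rcases Finset.mem_insert.1 hb with h | h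
  · exact absurd h.symm hab
  · exact Finset.mem_singleton.1 h

lemma vstep_not_from_crit_aux (hf : IsDMF K f) {c b : V} (hc : IsCritical K f {c})
    (h : VStep K f c b) : False := by
  obtain ⟨hcb, hK, hle⟩ := h
  have := hc.2.1 _ hK (by simp) (by simp [Finset.card_pair hcb])
  linarith

lemma vpath_unique_pair_aux (hG : IsGraph K) (hf : IsDMF K f) {c w : V}
    (hc : IsCritical K f {c}) (hw : IsCritical K f {w}) :
    ∀ (l : List V) (a : V) (l' : List V), IsVPath K f l a c → IsVPath K f l' a w →
      c = w ∧ l = l' := by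
  intro l
  induction l with
  | nil =>
    intro a l' h h'
    obtain ⟨-, h2, -⟩ := h
    simp at h2
  | cons x t ih =>
    intro a l' h h'
    obtain ⟨hch, hhd, hlast⟩ := h
    obtain ⟨hch', hhd', hlast'⟩ := h'
    have hx : x = a := by simpa using hhd
    subst a
    cases l' with
    | nil => simp at hhd'
    | cons x' t' =>
      have hx' : x' = x := by simpa using hhd'
      subst x'
      cases t with
      | nil =>
        have hxc : x = c := by simpa using hlast
        subst hxc
        cases t' with
        | nil =>
          have : x = w := by simpa using hlast'
          exact ⟨this, rfl⟩
        | cons b' r' =>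
          exact absurd (List.isChain_cons_cons.1 hch').1 (fun hst =>
            vstep_not_from_crit_aux hf hc hst)
      | cons b r =>
        cases t' with
        | nil =>
          have hxw : x = w := by simpa using hlast'
          subst hxw
          exact absurd (List.isChain_cons_cons.1 hch).1 (fun hst =>
            vstep_not_from_crit_aux hf hw hst)
        | cons b' r' =>
          obtain ⟨hst, hch2⟩ := List.isChain_cons_cons.1 hch
          obtain ⟨hst', hch2'⟩ := List.isChain_cons_cons.1 hch'
          have hbb : b = b' := vstep_unique_aux hG hf hst hst'
          subst hbb
          have hrec := ih b (b :: r') ⟨hch2, rfl, by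
              rw [List.getLast?_cons_cons] at hlast; exact hlast⟩
            ⟨hch2', rfl, by rw [List.getLast?_cons_cons] at hlast'; exact hlast'⟩
          exact ⟨hrec.1, by rw [hrec.2]⟩

lemma estep_not_into_crit_aux (hG : IsGraph K) {d e : Finset V} (he : IsCritical K f e)
    (h : EStep K f d e) : False := by
  obtain ⟨hdK, heK, hcd, hce, hne, v, hvd, hve, hfe⟩ := h
  have := he.2.2 {v} (singleton_mem_aux hG heK hve)
    (Finset.singleton_subset_iff.2 hve) (by simp [hce])
  linarith

lemma estep_lt_aux (hG : IsGraph K) (hf : IsDMF K f) {d e : Finset V}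
    (h : EStep K f d e) : f e < f d := by
  obtain ⟨hdK, heK, hcd, hce, hne, v, hvd, hve, hfe⟩ := h
  by_contra hle
  push_neg at hle
  exact hne (cofacet_unique_aux hG hf hdK heK hcd hce hvd hve (le_trans hle hfe) hfe)

lemma echain_nodup_aux (hG : IsGraph K) (hf : IsDMF K f) {l : List (Finset V)}
    (h : l.Chain' (EStep K f)) : l.Nodup := by
  have h1 : l.Chain' (fun d e => f e < f d) := h.imp (fun _ _ hde => estep_lt_aux hG hf hde)
  have : IsTrans (Finset V) (fun d e : Finset V => f e < f d) :=
    ⟨fun _ _ _ h1 h2 => lt_trans h2 h1⟩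
  have h2 := List.isChain_iff_pairwise.1 h1
  exact h2.imp (fun hde => by rintro rfl; exact lt_irrefl _ hde)

lemma mem_tail_pred_aux {α : Type*} {R : α → α → Prop} :
    ∀ {l : List α} {e : α}, l.Chain' R → e ∈ l.tail → ∃ d, R d e := by
  intro l
  induction l with
  | nil => intro e _ he; simp at he
  | cons x t ih =>
    intro e hch he
    simp only [List.tail_cons] at he
    cases t with
    | nil => simp at he
    | cons b r =>
      obtain ⟨hxb, hch'⟩ := List.isChain_cons_cons.1 hch
      rcases List.mem_cons.1 he with rfl | he'
      · exact ⟨x, hxb⟩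
      · exact ih hch' he'

/-- A chain member that is in the tail has an `EStep` into it;
hence it is an edge of `K`. -/
lemma mem_tail_edge_aux (hG : IsGraph K) {l : List (Finset V)} {e : Finset V}
    (h : l.Chain' (EStep K f)) (he : e ∈ l.tail) : e ∈ K ∧ e.card = 2 := by
  obtain ⟨d, hd⟩ := mem_tail_pred_aux h he
  exact ⟨hd.2.1, hd.2.2.2.1⟩

lemma not_mem_dropLast_of_getLast_aux {α : Type*} {l : List α} {y : α}
    (hnd : l.Nodup) (hy : l.getLast? = some y) : y ∉ l.dropLast := by
  have hne : l ≠ [] := by rintro rfl; simp at hy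
  have hgl : l.getLast hne = y := by
    have := List.getLast?_eq_getLast hne
    rw [this] at hy; exact Option.some_injective _ hy
  have hsplit := List.dropLast_append_getLast hne
  rw [hgl] at hsplit
  intro hmem
  have : ¬ (l.dropLast ++ [y]).Nodup := by
    intro hnd2
    have := (List.nodup_append.1 hnd2).2.2
    exact this y hmem y (by simp) rfl
  rw [hsplit] at this
  exact this hnd

/-- Determinism of edge gradient paths past the first step. -/
lemma edet_aux (hG : IsGraph K) (hf : IsDMF K f) :
    ∀ (s s' : List (Finset V)) (e : Finset V) (w : V),
      w ∈ e → f e ≤ f ({w} : Finset V) → e ∈ K → e.card = 2 →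
      (e :: s).Chain' (EStep K f) → (e :: s').Chain' (EStep K f) →
      s <+: s' ∨ s' <+: s := by
  intro s
  induction s with
  | nil => intro s' e w _ _ _ _ _ _; exact Or.inl (List.nil_prefix)
  | cons d r ih =>
    intro s' e w hw hfw heK hce hch hch'
    cases s' with
    | nil => exact Or.inr (List.nil_prefix)
    | cons d' r' =>
      obtain ⟨hed, hch2⟩ := List.isChain_cons_cons.1 hch
      obtain ⟨hed', hch2'⟩ := List.isChain_cons_cons.1 hch'
      obtain ⟨-, hdK, -, hcd, hne, v, hve, hvd, hfv⟩ := hed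
      obtain ⟨-, hdK', -, hcd', hne', v', hve', hvd', hfv'⟩ := hed'
      have hvw : v ≠ w := by
        rintro rfl
        exact hne (cofacet_unique_aux hG hf heK hdK hce hcd hve hvd hfw hfv)
      have hv'w : v' ≠ w := by
        rintro rfl
        exact hne' (cofacet_unique_aux hG hf heK hdK' hce hcd' hve' hvd' hfw hfv')
      have h1 : (e.erase w).card = 1 := by rw [Finset.card_erase_of_mem hw, hce]
      obtain ⟨p, hp⟩ := Finset.card_eq_one.1 h1
      have hv : v = p := by
        have := Finset.mem_erase.2 ⟨hvw, hve⟩; rw [hp] at this; simpa using this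
      have hv' : v' = p := by
        have := Finset.mem_erase.2 ⟨hv'w, hve'⟩; rw [hp] at this; simpa using this
      have hvv' : v = v' := hv.trans hv'.symm
      have hdd' : d = d' :=
        cofacet_unique_aux hG hf hdK hdK' hcd hcd' hvd (hvv' ▸ hvd') hfv (hvv' ▸ hfv')
      subst hdd'
      rcases ih r' d v hvd hfv hdK hcd hch2 hch2' with h | h
      · exact Or.inl ((List.prefix_cons_inj d).2 h)
      · exact Or.inr ((List.prefix_cons_inj d).2 h)
lemma hadj_aux (hG : IsGraph K) {x y a b : V} (hx : x ≠ y) (hxy : ({x, y} : Finset V) ∈ K)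
    (hne : ({x, y} : Finset V) ≠ ({a, b} : Finset V)) :
    ((toSG K) \ SimpleGraph.fromEdgeSet {s(a, b)}).Adj x y := by
  rw [SimpleGraph.sdiff_adj]
  refine ⟨(show x ≠ y ∧ ({x, y} : Finset V) ∈ K from ⟨hx, hxy⟩), ?_⟩
  rw [SimpleGraph.fromEdgeSet_adj]
  rintro ⟨hmem, -⟩
  simp only [Set.mem_singleton_iff] at hmem
  apply hne
  rcases Sym2.eq_iff.1 hmem with ⟨rfl, rfl⟩ | ⟨rfl, rfl⟩
  · rfl
  · exact Finset.pair_comm x y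

/-- Two vertices of an edge distinct from the deleted edge are reachable
in the graph minus the deleted edge. -/
lemma reach_in_edge_aux (hG : IsGraph K) {x' : Finset V} {a b : V} {p q : V}
    (hK : x' ∈ K) (hc : x'.card = 2) (hne : x' ≠ ({a, b} : Finset V))
    (hp : p ∈ x') (hq : q ∈ x') :
    ((toSG K) \ SimpleGraph.fromEdgeSet {s(a, b)}).Reachable p q := by
  by_cases hpq : p = q
  · exact hpq ▸ SimpleGraph.Reachable.refl p
  · have hsub : ({p, q} : Finset V) ⊆ x' := by
      intro z hz
      rcases Finset.mem_insert.1 hz with rfl | hz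
      · exact hp
      · exact (Finset.mem_singleton.1 hz) ▸ hq
    have hpair : ({p, q} : Finset V) = x' :=
      Finset.eq_of_subset_of_card_le hsub (by rw [hc, Finset.card_pair hpq])
    exact (hadj_aux hG hpq (hpair ▸ hK) (hpair ▸ hne)).reachable

lemma no_reach_aux (hG : IsGraph K) (hforest : (toSG K).IsAcyclic) {a b : V} (hab : a ≠ b)
    (hK : ({a, b} : Finset V) ∈ K) :
    ¬ ((toSG K) \ SimpleGraph.fromEdgeSet {s(a, b)}).Reachable a b := by
  have hadj : (toSG K).Adj a b := (show a ≠ b ∧ ({a, b} : Finset V) ∈ K from ⟨hab, hK⟩)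
  have hbridge := (SimpleGraph.isAcyclic_iff_forall_edge_isBridge.1 hforest)
    ((SimpleGraph.mem_edgeSet _).2 hadj)
  exact SimpleGraph.isBridge_iff.1 hbridge

lemma bridge_contra_aux (hG : IsGraph K) (hforest : (toSG K).IsAcyclic)
    {c₀ : Finset V} (hcK : c₀ ∈ K) {p q : V} (hpq : p ≠ q) (hc₀ : c₀ = ({p, q} : Finset V))
    {v w : V} (hv : v ∈ c₀) (hw : w ∈ c₀) (hvw : v ≠ w)
    (hreach : ((toSG K) \ SimpleGraph.fromEdgeSet {s(p, q)}).Reachable v w) : False := by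
  subst hc₀
  have hnr := no_reach_aux hG hforest hpq hcK
  simp only [Finset.mem_insert, Finset.mem_singleton] at hv hw
  rcases hv with rfl | rfl <;> rcases hw with rfl | rfl
  · exact hvw rfl
  · exact hnr hreach
  · exact hnr hreach.symm
  · exact hvw rfl

/-- The reachability backbone of a gradient edge path: from a vertex of the first
edge to the cheap facet of the last edge, avoiding a fixed deleted edge `{a,b}`
that does not occur among the interior edges. -/
lemma reach_of_chain_aux (hG : IsGraph K) (hf : IsDMF K f) {a b : V} :
    ∀ (t : List (Finset V)) (e d : Finset V),
      (e :: t).Chain' (EStep K f) → t.getLast? = some d →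
      ({a, b} : Finset V) ∉ t.dropLast →
      ∃ v u, v ∈ e ∧ u ∈ d ∧ f d ≤ f ({u} : Finset V) ∧
        (∀ e', t.head? = some e' → v ∈ e' ∧ f e' ≤ f ({v} : Finset V)) ∧
        ((toSG K) \ SimpleGraph.fromEdgeSet {s(a, b)}).Reachable v u := by
  intro t
  induction t with
  | nil => intro e d _ h _; simp at h
  | cons e' t' ih =>
    intro e d hch hlast hdrop
    obtain ⟨hstep, hch'⟩ := List.isChain_cons_cons.1 hch
    obtain ⟨heK, he'K, hce, hce', hnee', v, hve, hve', hfv⟩ := hstep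
    cases t' with
    | nil =>
      have hd : e' = d := by simpa using hlast
      subst hd
      exact ⟨v, v, hve, hve', hfv,
        fun x hx => by
          have hxe : e' = x := by simpa using hx
          exact hxe ▸ ⟨hve', hfv⟩,
        SimpleGraph.Reachable.refl v⟩
    | cons g t'' =>
      have hlast2 : (g :: t'').getLast? = some d := by
        rw [List.getLast?_cons_cons] at hlast; exact hlast
      have hdrop2 : ({a, b} : Finset V) ∉ (g :: t'').dropLast := by
        rw [List.dropLast_cons₂] at hdrop
        exact fun hm => hdrop (List.mem_cons_of_mem _ hm)
      have he'ne : e' ≠ ({a, b} : Finset V) := by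
        rw [List.dropLast_cons₂] at hdrop
        exact fun hm => hdrop (hm ▸ List.mem_cons_self)
      obtain ⟨v', u, hv'e', hud, hfu, hhead, hreach⟩ := ih e' d hch' hlast2 hdrop2
      obtain ⟨hv'g, hfg⟩ := hhead g rfl
      obtain ⟨he'g, hch2⟩ : EStep K f e' g ∧ _ := List.isChain_cons_cons.1 hch'
      have hvv' : v ≠ v' := by
        rintro rfl
        exact he'g.2.2.2.2.1 (cofacet_unique_aux hG hf he'K he'g.2.1 hce'
          he'g.2.2.2.1 hve' hv'g hfv hfg)
      have hsub : ({v, v'} : Finset V) ⊆ e' := by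
        intro z hz
        rcases Finset.mem_insert.1 hz with rfl | hz
        · exact hve'
        · exact (Finset.mem_singleton.1 hz) ▸ hv'e'
      have hpair : ({v, v'} : Finset V) = e' :=
        Finset.eq_of_subset_of_card_le hsub (by rw [hce', Finset.card_pair hvv'])
      have hadjv : ((toSG K) \ SimpleGraph.fromEdgeSet {s(a, b)}).Adj v v' :=
        hadj_aux hG hvv' (hpair ▸ he'K) (hpair ▸ he'ne)
      exact ⟨v, u, hve, hud, hfu,
        fun x hx => by
          have hxe : e' = x := by simpa using hx
          exact hxe ▸ ⟨hve', hfv⟩,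
        hadjv.reachable.trans hreach⟩
lemma epath_shape_aux {l : List (Finset V)} {s t : Finset V} (h : IsEPath K g l s t) :
    ∃ tl, l = s :: tl := by
  obtain ⟨-, hhd, -⟩ := h
  cases l with
  | nil => simp at hhd
  | cons a tl =>
    have ha : a = s := by simpa using hhd
    exact ⟨tl, by rw [ha]⟩

/-- A gradient path ending in a critical simplex of the same field is trivial. -/
lemma epath_to_crit_aux (hG : IsGraph K) {l : List (Finset V)} {s t : Finset V}
    (ht : IsCritical K g t) (h : IsEPath K g l s t) : l = [s] ∧ s = t := by
  obtain ⟨tl, rfl⟩ := epath_shape_aux h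
  obtain ⟨hch, hhd, hgl⟩ := h
  cases tl with
  | nil => exact ⟨rfl, by simpa using hgl⟩
  | cons q1 tl' =>
    have hmem : t ∈ (s :: q1 :: tl').tail := by
      rw [List.getLast?_cons_cons] at hgl
      exact List.mem_of_getLast? hgl
    obtain ⟨d, hd⟩ := mem_tail_pred_aux hch hmem
    exact absurd hd (fun h' => estep_not_into_crit_aux hG ht h')

/-- The key forest argument: a strict extension of a gradient `f`-path past a
`g`-critical edge `y` is impossible, given a returning `g`-path. -/
lemma prefix_contra_aux (hG : IsGraph K) (hforest : (toSG K).IsAcyclic)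
    (hf : IsDMF K f) (hg : IsDMF K g) {x y y' : Finset V}
    (hcx : x.card = 2) (hxK : x ∈ K) (hy : IsCritical K g y)
    {tP rest lQ' : List (Finset V)}
    (htP : tP ≠ []) (hrest : rest ≠ [])
    (hch : (x :: (tP ++ rest)).Chain' (EStep K f))
    (hyl : tP.getLast? = some y)
    (hlast' : (x :: (tP ++ rest)).getLast? = some y')
    (hQ' : IsEPath K g lQ' y' x) : False := by
  have hnd : (x :: (tP ++ rest)).Nodup := echain_nodup_aux hG hf hch
  have hymem : y ∈ tP := List.mem_of_getLast? hyl
  have hxnot : x ∉ tP ++ rest := (List.nodup_cons.1 hnd).1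
  obtain ⟨hndP, hndR, hdisj⟩ := List.nodup_append.1 (List.nodup_cons.1 hnd).2
  -- split the chain at y
  have hch2 : ((x :: tP) ++ rest).Chain' (EStep K f) := hch
  obtain ⟨hchP, hchR, hjunc⟩ := List.isChain_append.1 hch2
  have hglP : (x :: tP).getLast? = some y := by
    cases tP with
    | nil => exact absurd rfl htP
    | cons h t => rw [List.getLast?_cons_cons]; exact hyl
  obtain ⟨rh, rt, rfl⟩ : ∃ rh rt, rest = rh :: rt := by
    cases rest with
    | nil => exact absurd rfl hrest
    | cons rh rt => exact ⟨rh, rt, rfl⟩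
  have hjy : EStep K f y rh := hjunc y (by simp [hglP]) rh (by simp)
  have hchYR : (y :: rh :: rt).Chain' (EStep K f) := List.isChain_cons_cons.2 ⟨hjy, hchR⟩
  -- y is an edge
  obtain ⟨hyK, hyc⟩ := mem_tail_edge_aux hG hch (by
    simp only [List.tail_cons]; exact List.mem_append_left _ hymem)
  obtain ⟨p, q, hpq, hy2⟩ := Finset.card_eq_two.1 hyc
  -- (1) reach from x-side into y
  obtain ⟨v₀, w, hv₀x, hwy, hfyw, -, hreach1⟩ :=
    reach_of_chain_aux (a := p) (b := q) hG hf tP x y hchP hyl (by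
      rw [← hy2]; exact not_mem_dropLast_of_getLast_aux hndP hyl)
  -- (2) reach along the extension from y to y'
  have hglR : (rh :: rt).getLast? = some y' := by
    rw [show (x :: (tP ++ rh :: rt)) = (x :: tP) ++ (rh :: rt) from rfl,
      List.getLast?_append_of_ne_nil _ (by simp)] at hlast'
    exact hlast'
  have hynotR : y ∉ (rh :: rt) := fun hm => hdisj _ hymem _ hm rfl
  obtain ⟨v, u', hvy, hu'y', -, hhd2, hreach2⟩ :=
    reach_of_chain_aux (a := p) (b := q) hG hf (rh :: rt) y y' hchYR hglR (by
      rw [← hy2]; exact fun hm => hynotR (List.Sublist.mem hm (List.dropLast_sublist _)))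
  obtain ⟨hvrh, hfrh⟩ := hhd2 rh rfl
  -- v and w are the two distinct vertices of y
  have hvw : v ≠ w := by
    rintro rfl
    exact hjy.2.2.2.2.1 (cofacet_unique_aux hG hf hyK hjy.2.1 hyc hjy.2.2.2.1 hvy hvrh
      hfyw hfrh)
  -- (3) the returning g-path from y'
  obtain ⟨tQ', rfl⟩ := epath_shape_aux hQ'
  obtain ⟨hchQ', hhdQ', hglQ'⟩ := hQ'
  have hy'mem : y' ∈ (rh :: rt) := List.mem_of_getLast? hglR
  have hxy' : x ≠ y' := fun h => hxnot (h ▸ List.mem_append_right _ hy'mem)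
  obtain ⟨q1, tQ2, rfl⟩ : ∃ q1 tQ2, tQ' = q1 :: tQ2 := by
    cases tQ' with
    | nil => exact absurd (show y' = x by simpa using hglQ').symm hxy'
    | cons q1 tQ2 => exact ⟨q1, tQ2, rfl⟩
  have hglQ2 : (q1 :: tQ2).getLast? = some x := by
    rw [List.getLast?_cons_cons] at hglQ'; exact hglQ'
  have hynotQ : y ∉ (q1 :: tQ2) := by
    intro hm
    obtain ⟨d, hd⟩ := mem_tail_pred_aux hchQ' (by simpa using hm)
    exact estep_not_into_crit_aux hG hy hd
  obtain ⟨v'', u'', hv''y', hu''x, -, -, hreach3⟩ :=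
    reach_of_chain_aux (a := p) (b := q) hG hg (q1 :: tQ2) y' x hchQ' hglQ2 (by
      rw [← hy2]; exact fun hm => hynotQ (List.Sublist.mem hm (List.dropLast_sublist _)))
  -- (4) connectors
  obtain ⟨hy'K, hy'c⟩ := mem_tail_edge_aux hG hch (by
    simp only [List.tail_cons]; exact List.mem_append_right _ hy'mem)
  have hy'ney : y' ≠ y := fun h => hdisj _ hymem _ (h ▸ hy'mem) rfl
  have hconnA := reach_in_edge_aux (a := p) (b := q) hG hy'K hy'c (by rw [← hy2]; exact hy'ney)
    hu'y' hv''y'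
  have hxney : x ≠ y := fun h => hxnot (List.mem_append_left _ (h ▸ hymem))
  have hconnB := reach_in_edge_aux (a := p) (b := q) hG hxK hcx (by rw [← hy2]; exact hxney)
    hu''x hv₀x
  have htotal := ((hreach2.trans hconnA).trans (hreach3.trans hconnB)).trans hreach1
  exact bridge_contra_aux hG hforest hyK hpq hy2 hvy hwy hvw htotal

/-- Main uniqueness lemma: given mutually returning gradient paths between
critical edges on a forest, the target and the path are unique. -/
lemma strong_main_aux (hG : IsGraph K) (hforest : (toSG K).IsAcyclic)
    (hf : IsDMF K f) (hg : IsDMF K g) {x y y' : Finset V}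
    (hcx : x.card = 2) (hcy : y.card = 2) (hcy' : y'.card = 2)
    (hx : IsCritical K f x) (hy : IsCritical K g y) (hy' : IsCritical K g y')
    {lP lQ lP' lQ' : List (Finset V)}
    (hP : IsEPath K f lP x y) (hQ : IsEPath K g lQ y x)
    (hP' : IsEPath K f lP' x y') (hQ' : IsEPath K g lQ' y' x) :
    y = y' ∧ lP = lP' := by
  obtain ⟨tP, rfl⟩ := epath_shape_aux hP
  obtain ⟨tP', rfl⟩ := epath_shape_aux hP'
  obtain ⟨hchP, -, hglP⟩ := hP
  obtain ⟨hchP', -, hglP'⟩ := hP'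
  by_cases htP : tP = []
  · subst htP
    have hyx : x = y := by simpa using hglP
    have hxcg : IsCritical K g x := hyx ▸ hy
    obtain ⟨-, hy'x⟩ := epath_to_crit_aux hG hxcg hQ'
    refine ⟨hyx ▸ hy'x.symm, ?_⟩
    cases tP' with
    | nil => rfl
    | cons g1 s =>
      have hy'mem : y' ∈ (g1 :: s) := by
        rw [List.getLast?_cons_cons] at hglP'
        exact List.mem_of_getLast? hglP'
      have hnd := echain_nodup_aux hG hf hchP'
      exact absurd (hy'x ▸ hy'mem) (List.nodup_cons.1 hnd).1
  by_cases htP' : tP' = []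
  · subst htP'
    have hy'x : x = y' := by simpa using hglP'
    have hxcg : IsCritical K g x := hy'x ▸ hy'
    obtain ⟨-, hyx⟩ := epath_to_crit_aux hG hxcg hQ
    exfalso
    have hymem : y ∈ tP := by
      cases tP with
      | nil => exact absurd rfl htP
      | cons g1 s =>
        rw [List.getLast?_cons_cons] at hglP
        exact List.mem_of_getLast? hglP
    have hnd := echain_nodup_aux hG hf hchP
    exact (List.nodup_cons.1 hnd).1 (hyx ▸ hymem)
  -- both paths nontrivial
  obtain ⟨g₁, sP, rfl⟩ : ∃ g₁ sP, tP = g₁ :: sP := by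
    cases tP with
    | nil => exact absurd rfl htP
    | cons g₁ sP => exact ⟨g₁, sP, rfl⟩
  obtain ⟨g₁', sP', rfl⟩ : ∃ g₁' sP', tP' = g₁' :: sP' := by
    cases tP' with
    | nil => exact absurd rfl htP'
    | cons g₁' sP' => exact ⟨g₁', sP', rfl⟩
  obtain ⟨hstep1, hchtP⟩ := List.isChain_cons_cons.1 hchP
  obtain ⟨hstep1', hchtP'⟩ := List.isChain_cons_cons.1 hchP'
  obtain ⟨hxK, hg₁K, -, hcg₁, hxg₁, v₀, hv₀x, hv₀g₁, hfv₀⟩ := hstep1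
  obtain ⟨-, hg₁K', -, hcg₁', hxg₁', v₀', hv₀'x, hv₀'g₁, hfv₀'⟩ := hstep1'
  have hglP2 : (g₁ :: sP).getLast? = some y := by
    rw [List.getLast?_cons_cons] at hglP; exact hglP
  have hglP2' : (g₁' :: sP').getLast? = some y' := by
    rw [List.getLast?_cons_cons] at hglP'; exact hglP'
  have hymem : y ∈ (g₁ :: sP) := List.mem_of_getLast? hglP2
  have hy'mem : y' ∈ (g₁' :: sP') := List.mem_of_getLast? hglP2'
  have hndP := echain_nodup_aux hG hf hchP
  have hndP' := echain_nodup_aux hG hf hchP'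
  have hxney : x ≠ y := fun h => (List.nodup_cons.1 hndP).1 (h ▸ hymem)
  have hxney' : x ≠ y' := fun h => (List.nodup_cons.1 hndP').1 (h ▸ hy'mem)
  by_cases hv : v₀ = v₀'
  · -- same first vertex: deterministic continuation, prefix relation
    subst hv
    have hg₁g₁' : g₁ = g₁' :=
      cofacet_unique_aux hG hf hg₁K hg₁K' hcg₁ hcg₁' hv₀g₁ hv₀'g₁ hfv₀ hfv₀'
    subst hg₁g₁'
    rcases edet_aux hG hf sP sP' g₁ v₀ hv₀g₁ hfv₀ hg₁K hcg₁ hchtP hchtP' with hpre | hpre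
    · obtain ⟨rest, hrest_eq⟩ := hpre
      cases rest with
      | nil =>
        rw [List.append_nil] at hrest_eq
        subst hrest_eq
        have : some y = some y' := hglP2 ▸ hglP2'
        exact ⟨Option.some_injective _ this, rfl⟩
      | cons r1 r2 =>
        exfalso
        have hch' : (x :: ((g₁ :: sP) ++ (r1 :: r2))).Chain' (EStep K f) := by
          have : (g₁ :: sP) ++ (r1 :: r2) = g₁ :: sP' := by
            rw [← hrest_eq]; rfl
          rw [this]; exact hchP'
        refine prefix_contra_aux hG hforest hf hg hcx hxK hy (by simp) (by simp)
          hch' hglP2 ?_ hQ'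
        have : (g₁ :: sP) ++ (r1 :: r2) = g₁ :: sP' := by rw [← hrest_eq]; rfl
        rw [this]; exact hglP'
    · obtain ⟨rest, hrest_eq⟩ := hpre
      cases rest with
      | nil =>
        rw [List.append_nil] at hrest_eq
        subst hrest_eq
        have : some y = some y' := hglP2 ▸ hglP2'
        exact ⟨Option.some_injective _ this, rfl⟩
      | cons r1 r2 =>
        exfalso
        have hch' : (x :: ((g₁ :: sP') ++ (r1 :: r2))).Chain' (EStep K f) := by
          have : (g₁ :: sP') ++ (r1 :: r2) = g₁ :: sP := by
            rw [← hrest_eq]; rfl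
          rw [this]; exact hchP
        refine prefix_contra_aux hG hforest hf hg hcx hxK hy' (by simp) (by simp)
          hch' hglP2' ?_ hQ
        have : (g₁ :: sP') ++ (r1 :: r2) = g₁ :: sP := by rw [← hrest_eq]; rfl
        rw [this]; exact hglP
  · -- different first vertices: contradiction with the bridge x
    exfalso
    have hsub : ({v₀, v₀'} : Finset V) ⊆ x := by
      intro z hz
      rcases Finset.mem_insert.1 hz with rfl | hz
      · exact hv₀x
      · exact (Finset.mem_singleton.1 hz) ▸ hv₀'x
    have hpair : ({v₀, v₀'} : Finset V) = x :=
      Finset.eq_of_subset_of_card_le hsub (by rw [hcx, Finset.card_pair hv])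
    have hxnotP : x ∉ (g₁ :: sP) := (List.nodup_cons.1 hndP).1
    have hxnotP' : x ∉ (g₁' :: sP') := (List.nodup_cons.1 hndP').1
    -- (1) reach along P
    obtain ⟨vA, u, hvAx, huy, -, hheadA, hreachA⟩ :=
      reach_of_chain_aux (a := v₀) (b := v₀') hG hf (g₁ :: sP) x y hchP hglP2 (by
        rw [hpair]
        exact fun hm => hxnotP (List.Sublist.mem hm (List.dropLast_sublist _)))
    obtain ⟨hvAg₁, hfvA⟩ := hheadA g₁ rfl
    have hvA : vA = v₀ := facet_unique_aux hG hf hg₁K hcg₁ hvAg₁ hv₀g₁ hfvA hfv₀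
    subst vA
    -- (2) reach along P'
    obtain ⟨vB, u₂, hvBx, hu₂y', -, hheadB, hreachB⟩ :=
      reach_of_chain_aux (a := v₀) (b := v₀') hG hf (g₁' :: sP') x y' hchP' hglP2' (by
        rw [hpair]
        exact fun hm => hxnotP' (List.Sublist.mem hm (List.dropLast_sublist _)))
    obtain ⟨hvBg₁, hfvB⟩ := hheadB g₁' rfl
    have hvB : vB = v₀' := facet_unique_aux hG hf hg₁K' hcg₁' hvBg₁ hv₀'g₁ hfvB hfv₀'
    subst vB
    -- (3) reach along Q
    obtain ⟨tQ, rfl⟩ := epath_shape_aux hQ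
    obtain ⟨hchQ, -, hglQ⟩ := hQ
    obtain ⟨q1, tQ2, rfl⟩ : ∃ q1 tQ2, tQ = q1 :: tQ2 := by
      cases tQ with
      | nil => exact absurd (show y = x by simpa using hglQ).symm hxney
      | cons q1 tQ2 => exact ⟨q1, tQ2, rfl⟩
    have hglQ2 : (q1 :: tQ2).getLast? = some x := by
      rw [List.getLast?_cons_cons] at hglQ; exact hglQ
    have hndQ := echain_nodup_aux hG hg hchQ
    obtain ⟨v₁, u₁, hv₁y, hu₁x, hgxu₁, -, hreachC⟩ :=
      reach_of_chain_aux (a := v₀) (b := v₀') hG hg (q1 :: tQ2) y x hchQ hglQ2 (by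
        rw [hpair]
        exact not_mem_dropLast_of_getLast_aux (List.nodup_cons.1 hndQ).2 hglQ2)
    -- (4) reach along Q'
    obtain ⟨tQ', rfl⟩ := epath_shape_aux hQ'
    obtain ⟨hchQ', -, hglQ'⟩ := hQ'
    obtain ⟨q1', tQ2', rfl⟩ : ∃ q1' tQ2', tQ' = q1' :: tQ2' := by
      cases tQ' with
      | nil => exact absurd (show y' = x by simpa using hglQ').symm hxney'
      | cons q1' tQ2' => exact ⟨q1', tQ2', rfl⟩
    have hglQ2' : (q1' :: tQ2').getLast? = some x := by
      rw [List.getLast?_cons_cons] at hglQ'; exact hglQ'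
    have hndQ' := echain_nodup_aux hG hg hchQ'
    obtain ⟨v₁', u₁', hv₁'y', hu₁'x, hgxu₁', -, hreachD⟩ :=
      reach_of_chain_aux (a := v₀) (b := v₀') hG hg (q1' :: tQ2') y' x hchQ' hglQ2' (by
        rw [hpair]
        exact not_mem_dropLast_of_getLast_aux (List.nodup_cons.1 hndQ').2 hglQ2')
    -- (5) the two returning paths enter x through the same vertex
    have hu₁ : u₁ = u₁' := facet_unique_aux hG hg hxK hcx hu₁x hu₁'x hgxu₁ hgxu₁'
    subst hu₁
    -- (6) connectors
    have hconnY := reach_in_edge_aux (a := v₀) (b := v₀') hG hy.1 hcy (by rw [hpair]; exact hxney.symm)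
      huy hv₁y
    have hconnY' := reach_in_edge_aux (a := v₀) (b := v₀') hG hy'.1 hcy' (by rw [hpair]; exact hxney'.symm)
      hv₁'y' hu₂y'
    have htotal := ((((hreachA.trans hconnY).trans hreachC).trans hreachD.symm).trans
      hconnY').trans hreachB.symm
    exact bridge_contra_aux hG hforest hxK hv hpair.symm hv₀x hv₀'x hv htotal
end Aux

/-- On a forest, strong connection between critical simplices (of either
dimension) is unique, and so are the realizing gradient paths. -/
theorem forest_strong_unique [DecidableEq V] (K : Finset (Finset V))
    (f₁ f₂ : Finset V → ℝ) (hG : IsGraph K) (hforest : (toSG K).IsAcyclic)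
    (hf₁ : IsDMF K f₁) (hf₂ : IsDMF K f₂) :
    ((∀ v₁ v₂ : V, IsCritical K f₁ {v₁} → IsCritical K f₂ {v₂} →
        Strong0 K f₁ f₂ v₁ v₂ →
        (∀ w : V, IsCritical K f₂ {w} → Strong0 K f₁ f₂ v₁ w → w = v₂) ∧
        (∀ w : V, IsCritical K f₁ {w} → Strong0 K f₁ f₂ w v₂ → w = v₁) ∧
        (∀ l l' : List V, IsVPath K f₂ l v₁ v₂ → IsVPath K f₂ l' v₁ v₂ → l = l') ∧
        (∀ l l' : List V, IsVPath K f₁ l v₂ v₁ → IsVPath K f₁ l' v₂ v₁ → l = l'))) ∧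
    ((∀ e₁ e₂ : Finset V, e₁.card = 2 → e₂.card = 2 →
        IsCritical K f₁ e₁ → IsCritical K f₂ e₂ → Strong1 K f₁ f₂ e₁ e₂ →
        (∀ e : Finset V, e.card = 2 → IsCritical K f₂ e → Strong1 K f₁ f₂ e₁ e → e = e₂) ∧
        (∀ e : Finset V, e.card = 2 → IsCritical K f₁ e → Strong1 K f₁ f₂ e e₂ → e = e₁) ∧
        (∀ l l' : List (Finset V),
          IsEPath K f₁ l e₁ e₂ → IsEPath K f₁ l' e₁ e₂ → l = l') ∧
        (∀ l l' : List (Finset V),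
          IsEPath K f₂ l e₂ e₁ → IsEPath K f₂ l' e₂ e₁ → l = l'))) := by
  constructor
  · intro v₁ v₂ hc₁ hc₂ hstr
    refine ⟨?_, ?_, ?_, ?_⟩
    · intro w hw hsw
      obtain ⟨l, hl⟩ := hstr.1
      obtain ⟨l', hl'⟩ := hsw.1
      exact (vpath_unique_pair_aux hG hf₂ hc₂ hw l v₁ l' hl hl').1.symm
    · intro w hw hsw
      obtain ⟨l, hl⟩ := hstr.2
      obtain ⟨l', hl'⟩ := hsw.2
      exact (vpath_unique_pair_aux hG hf₁ hc₁ hw l v₂ l' hl hl').1.symm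
    · intro l l' h h'
      exact (vpath_unique_pair_aux hG hf₂ hc₂ hc₂ l v₁ l' h h').2
    · intro l l' h h'
      exact (vpath_unique_pair_aux hG hf₁ hc₁ hc₁ l v₂ l' h h').2
  · intro e₁ e₂ hce₁ hce₂ hcr₁ hcr₂ hstr
    obtain ⟨⟨lP, hP⟩, ⟨lQ, hQ⟩⟩ := hstr
    refine ⟨?_, ?_, ?_, ?_⟩
    · intro e hce hcr hstr'
      obtain ⟨⟨lP', hP'⟩, ⟨lQ', hQ'⟩⟩ := hstr'
      exact (strong_main_aux hG hforest hf₁ hf₂ hce₁ hce₂ hce hcr₁ hcr₂ hcr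
        hP hQ hP' hQ').1.symm
    · intro e hce hcr hstr'
      obtain ⟨⟨lP', hP'⟩, ⟨lQ', hQ'⟩⟩ := hstr'
      exact (strong_main_aux hG hforest hf₂ hf₁ hce₂ hce₁ hce hcr₂ hcr₁ hcr
        hQ hP hQ' hP').1.symm
    · intro l l' h h'
      exact (strong_main_aux hG hforest hf₁ hf₂ hce₁ hce₂ hce₂ hcr₁ hcr₂ hcr₂
        h hQ h' hQ).2
    · intro l l' h h'
      exact (strong_main_aux hG hforest hf₂ hf₁ hce₂ hce₁ hce₁ hcr₂ hcr₁ hcr₁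
        h hP h' hP).2
end
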